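/- arXiv:1209.6133 — 3 statements merged into one kernel-verified Lean document; each statement's English description precedes it below -/
import Mathlib

section
/- Let f ≥ 0 be a measurable function on (0,∞)^k, let r > 0, p ≥ 1 and k a positive integer. Then (∫_0^∞ (∫_0^x ⋯ ∫_0^x f(r₁,…,r_k) dr₁⋯dr_k)^p x^{−r−1} dx)^{1/p} ≤ ∫_0^1 ⋯ ∫_0^1 (∫_0^∞ (x^k f(x v₁,…,x v_k))^p x^{−r−1} dx)^{1/p} dv₁⋯dv_k. -/
/-!
Substituting `y = x • v` turns the inner integral over `(0,x)^k` into
`x^k ∫_{(0,1)^k} f (x • v) dv`, so the left-hand side is the `L^p(x^{-r-1} dx)` norm of an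
integral over `v ∈ (0,1)^k`, and Minkowski's integral inequality moves the norm inside.

Minkowski's inequality for `Φ x = ∫ F x v dv` comes from Hölder's inequality in `x` for each `v`:
`‖G‖_p^p ≤ ∫ G^{p-1} Φ ≤ ‖G‖_p^{p-1} ∫ ‖F · v‖_p dv` for any `G ≤ Φ`, which can be divided by
`‖G‖_p^{p-1}` once `‖G‖_p < ∞`. Truncations of `Φ` (bounded, supported on sets of finite measure)
have this property, and Fatou's lemma passes to `Φ` itself.
-/

open MeasureTheory Set Filter Topology Function
open scoped ENNReal Pointwise

theorem ENNReal.rpow_one_div_le_of_le_rpow_mul {p q : ℝ} (hpq : p.HolderConjugate q)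
    {A B : ℝ≥0∞} (hA : A ≠ ∞) (h : A ≤ A ^ (1 / q) * B) : A ^ (1 / p) ≤ B := by
  rcases eq_or_ne A 0 with rfl | hA0
  · rw [ENNReal.zero_rpow_of_pos (one_div_pos.2 hpq.pos)]
    exact zero_le
  have hsplit : A ^ (1 / p) * A ^ (1 / q) = A := by
    rw [← ENNReal.rpow_add _ _ hA0 hA, one_div, one_div, hpq.inv_add_inv_eq_one,
      ENNReal.rpow_one]
  have hAq0 : A ^ (1 / q) ≠ 0 := (ENNReal.rpow_pos (pos_iff_ne_zero.2 hA0) hA).ne'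
  have hAqtop : A ^ (1 / q) ≠ ∞ := ENNReal.rpow_ne_top_of_nonneg (by simp [hpq.symm.nonneg]) hA
  rw [← ENNReal.mul_le_mul_iff_left hAq0 hAqtop, hsplit, mul_comm]
  exact h

namespace MeasureTheory

variable {α β : Type*} [MeasurableSpace α] [MeasurableSpace β] {μ : Measure α} {ν : Measure β}

section Truncation

noncomputable def truncate (μ : Measure α) [SigmaFinite μ] (Φ : α → ℝ≥0∞) (n : ℕ) : α → ℝ≥0∞ :=
  (spanningSets μ n).indicator fun x => min (Φ x) n

variable [SigmaFinite μ] {Φ : α → ℝ≥0∞}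

theorem truncate_le (n : ℕ) (x : α) : truncate μ Φ n x ≤ Φ x := by
  unfold truncate
  by_cases hx : x ∈ spanningSets μ n
  · simp [indicator_of_mem hx]
  · simp [indicator_of_notMem hx]

theorem measurable_truncate (hΦ : Measurable Φ) (n : ℕ) : Measurable (truncate μ Φ n) :=
  (hΦ.min measurable_const).indicator (measurableSet_spanningSets μ n)

theorem lintegral_truncate_rpow_ne_top {p : ℝ} (hp : 0 < p) (n : ℕ) :
    ∫⁻ x, truncate μ Φ n x ^ p ∂μ ≠ ∞ := by
  have hbound :
      ∀ x, truncate μ Φ n x ^ p ≤ (spanningSets μ n).indicator (fun _ => (n : ℝ≥0∞) ^ p) x := by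
    intro x
    unfold truncate
    by_cases hx : x ∈ spanningSets μ n
    · simp only [indicator_of_mem hx]
      exact ENNReal.rpow_le_rpow (min_le_right _ _) hp.le
    · simp [indicator_of_notMem hx, ENNReal.zero_rpow_of_pos hp]
  refine ne_top_of_le_ne_top ?_ (lintegral_mono hbound)
  rw [lintegral_indicator_const (measurableSet_spanningSets μ n)]
  exact ENNReal.mul_ne_top (ENNReal.rpow_ne_top_of_nonneg hp.le (ENNReal.natCast_ne_top n))
    (measure_spanningSets_lt_top μ n).ne

theorem tendsto_truncate (x : α) : Tendsto (fun n => truncate μ Φ n x) atTop (𝓝 (Φ x)) := by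
  have hmin : Tendsto (fun n : ℕ => min (Φ x) n) atTop (𝓝 (min (Φ x) ∞)) :=
    tendsto_const_nhds.min ENNReal.tendsto_nat_nhds_top
  rw [min_top_right] at hmin
  refine hmin.congr' ?_
  filter_upwards [eventually_mem_spanningSets μ x] with n hn
  simp [truncate, indicator_of_mem hn]

end Truncation

section Minkowski

variable [SFinite ν] {F : α → β → ℝ≥0∞}

theorem lintegral_rpow_le_of_le_lintegral [SFinite μ] {p q : ℝ} (hpq : p.HolderConjugate q)
    (hF : Measurable (uncurry F)) {G : α → ℝ≥0∞} (hG : Measurable G)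
    (hGF : ∀ x, G x ≤ ∫⁻ v, F x v ∂ν) (hG_fin : ∫⁻ x, G x ^ p ∂μ ≠ ∞) :
    (∫⁻ x, G x ^ p ∂μ) ^ (1 / p) ≤ ∫⁻ v, (∫⁻ x, F x v ^ p ∂μ) ^ (1 / p) ∂ν := by
  set A := ∫⁻ x, G x ^ p ∂μ
  refine ENNReal.rpow_one_div_le_of_le_rpow_mul hpq hG_fin ?_
  have hG_pow : ∀ x, G x ^ p = G x ^ (p - 1) * G x := fun x => by
    conv_lhs => rw [← sub_add_cancel p 1]
    rw [ENNReal.rpow_add_of_nonneg _ _ (sub_nonneg.2 hpq.lt.le) zero_le_one, ENNReal.rpow_one]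
  have holder : ∀ v, ∫⁻ x, G x ^ (p - 1) * F x v ∂μ ≤
      A ^ (1 / q) * (∫⁻ x, F x v ^ p ∂μ) ^ (1 / p) := by
    intro v
    have h := ENNReal.lintegral_mul_le_Lp_mul_Lq μ hpq.symm ((hG.pow_const (p - 1)).aemeasurable)
      (hF.of_uncurry_right (y := v)).aemeasurable
    simp_rw [← ENNReal.rpow_mul, hpq.sub_one_mul_conj] at h
    exact h
  calc A ≤ ∫⁻ x, G x ^ (p - 1) * ∫⁻ v, F x v ∂ν ∂μ := by
        simp_rw [A, hG_pow]
        gcongr with x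
        exact hGF x
    _ = ∫⁻ x, ∫⁻ v, G x ^ (p - 1) * F x v ∂ν ∂μ :=
        lintegral_congr fun x => (lintegral_const_mul _ hF.of_uncurry_left).symm
    _ = ∫⁻ v, ∫⁻ x, G x ^ (p - 1) * F x v ∂μ ∂ν :=
        lintegral_lintegral_swap (((hG.pow_const _).comp measurable_fst).mul hF).aemeasurable
    _ ≤ ∫⁻ v, A ^ (1 / q) * (∫⁻ x, F x v ^ p ∂μ) ^ (1 / p) ∂ν := lintegral_mono holder
    _ = A ^ (1 / q) * ∫⁻ v, (∫⁻ x, F x v ^ p ∂μ) ^ (1 / p) ∂ν :=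
        lintegral_const_mul' _ _
          (ENNReal.rpow_ne_top_of_nonneg (by simp [hpq.symm.nonneg]) hG_fin)

/-- **Minkowski's integral inequality**. -/
theorem lintegral_lintegral_rpow_le [SigmaFinite μ] {p : ℝ} (hp : 1 ≤ p)
    (hF : Measurable (uncurry F)) :
    (∫⁻ x, (∫⁻ v, F x v ∂ν) ^ p ∂μ) ^ (1 / p) ≤ ∫⁻ v, (∫⁻ x, F x v ^ p ∂μ) ^ (1 / p) ∂ν := by
  rcases hp.eq_or_lt with rfl | hp
  · simpa using (lintegral_lintegral_swap hF.aemeasurable).le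
  have hp0 : 0 < p := zero_lt_one.trans hp
  set Φ := fun x => ∫⁻ v, F x v ∂ν
  set B := ∫⁻ v, (∫⁻ x, F x v ^ p ∂μ) ^ (1 / p) ∂ν
  have hΦ : Measurable Φ := hF.lintegral_prod_right
  have htrunc : ∀ n, ∫⁻ x, truncate μ Φ n x ^ p ∂μ ≤ B ^ p := fun n =>
    (ENNReal.rpow_inv_le_iff hp0).1 <| one_div p ▸ lintegral_rpow_le_of_le_lintegral
      (Real.HolderConjugate.conjExponent hp) hF (measurable_truncate hΦ n) (truncate_le n)
      (lintegral_truncate_rpow_ne_top hp0 n)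
  rw [one_div, ENNReal.rpow_inv_le_iff hp0]
  calc ∫⁻ x, Φ x ^ p ∂μ
      = ∫⁻ x, liminf (fun n => truncate μ Φ n x ^ p) atTop ∂μ := lintegral_congr fun x =>
        ((ENNReal.continuous_rpow_const.tendsto (Φ x)).comp (tendsto_truncate x)).liminf_eq.symm
    _ ≤ liminf (fun n => ∫⁻ x, truncate μ Φ n x ^ p ∂μ) atTop :=
        lintegral_liminf_le fun n => (measurable_truncate hΦ n).pow_const p
    _ ≤ B ^ p := liminf_le_of_frequently_le' (Frequently.of_forall htrunc)

end Minkowski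

open Module in
theorem Measure.setLIntegral_smul_set {E : Type*} [NormedAddCommGroup E]
    [NormedSpace ℝ E] [MeasurableSpace E] [BorelSpace E] [FiniteDimensional ℝ E]
    (μ : Measure E) [μ.IsAddHaarMeasure] (g : E → ℝ≥0∞) {R : ℝ} (hR : R ≠ 0) (s : Set E) :
    ∫⁻ x in R • s, g x ∂μ = ENNReal.ofReal (|R| ^ finrank ℝ E) * ∫⁻ x in s, g (R • x) ∂μ := by
  let e : E ≃ᵐ E := (Homeomorph.smul (Units.mk0 R⁻¹ (inv_ne_zero hR))).toMeasurableEquiv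
  have he : ⇑e = fun x => R⁻¹ • x := rfl
  have hmap : μ.map e = ENNReal.ofReal (|R| ^ finrank ℝ E) • μ := by
    rw [he, map_addHaar_smul μ (inv_ne_zero hR), inv_pow, inv_inv, abs_pow]
  rw [← smul_eq_mul, ← setLIntegral_smul_measure, ← hmap, e.restrict_map, lintegral_map_equiv,
    he, preimage_smul_inv₀ hR]
  simp only [smul_inv_smul₀ hR]

end MeasureTheory

theorem hardy_type_inequality_general (k : ℕ) (f : (Fin k → ℝ) → ℝ)
    (hf : Measurable f) (r p : ℝ) (hp : 1 ≤ p) :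
    (∫⁻ x in Set.Ioi (0 : ℝ),
        (∫⁻ y in Set.pi Set.univ (fun _ : Fin k => Set.Ioo (0 : ℝ) x),
            ENNReal.ofReal (f y)) ^ p * ENNReal.ofReal (x ^ (-r - 1))) ^ (1 / p)
      ≤ ∫⁻ v in Set.pi Set.univ (fun _ : Fin k => Set.Ioo (0 : ℝ) 1),
          (∫⁻ x in Set.Ioi (0 : ℝ),
              ENNReal.ofReal (x ^ k * f (fun i => x * v i)) ^ p *
                ENNReal.ofReal (x ^ (-r - 1))) ^ (1 / p) := by
  set cube : ℝ → Set (Fin k → ℝ) := fun x => Set.pi Set.univ fun _ => Set.Ioo 0 x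
  set w : ℝ → ℝ≥0∞ := fun x => ENNReal.ofReal (x ^ (-r - 1))
  set μ := (volume.restrict (Ioi (0 : ℝ))).withDensity w
  set F : ℝ → (Fin k → ℝ) → ℝ≥0∞ := fun x v => ENNReal.ofReal (x ^ k * f (fun i => x * v i))
  have hμ (h : ℝ → ℝ≥0∞) : ∫⁻ x in Ioi 0, h x * w x = ∫⁻ x, h x ∂μ := by
    rw [lintegral_withDensity_eq_lintegral_mul_non_measurable _ (by fun_prop)
      (ae_of_all _ fun _ => ENNReal.ofReal_lt_top)]
    simp only [Pi.mul_apply, mul_comm, w]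
  have hcube {x : ℝ} (hx : 0 < x) :
      ∫⁻ y in cube x, ENNReal.ofReal (f y) = ∫⁻ v in cube 1, F x v := by
    have : cube x = x • cube 1 := by
      simp [cube, smul_set_univ_pi, Pi.smul_def, LinearOrderedField.smul_Ioo hx]
    rw [this, Measure.setLIntegral_smul_set _ _ hx.ne', Module.finrank_fin_fun, abs_of_pos hx,
      ← lintegral_const_mul' _ _ ENNReal.ofReal_ne_top]
    refine lintegral_congr fun v => ?_
    rw [← ENNReal.ofReal_mul (by positivity)]
    rfl
  have hF : Measurable (uncurry F) := by
    unfold F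
    fun_prop
  calc _ = (∫⁻ x, (∫⁻ v in cube 1, F x v) ^ p ∂μ) ^ (1 / p) := by
        rw [← hμ]
        congr 1
        exact setLIntegral_congr_fun measurableSet_Ioi fun x hx => by rw [hcube hx]
    _ ≤ ∫⁻ v in cube 1, (∫⁻ x, F x v ^ p ∂μ) ^ (1 / p) := lintegral_lintegral_rpow_le hp hF
    _ = _ := by simp_rw [← hμ]; rfl

/-- **Lemma (Hardy-type inequality).**
Let `f ≥ 0` be measurable on `(0,∞)^k`, `r > 0`, `p ≥ 1` and `k` a positive integer. Then
`(∫_0^∞ (∫_{(0,x)^k} f)^p x^{-r-1} dx)^{1/p}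
  ≤ ∫_{(0,1)^k} (∫_0^∞ (x^k f(xv₁,…,xv_k))^p x^{-r-1} dx)^{1/p} dv`. -/
theorem hardy_type_inequality (k : ℕ) (hk : 0 < k) (f : (Fin k → ℝ) → ℝ)
    (hf : Measurable f) (hf0 : ∀ y, 0 ≤ f y) (r p : ℝ) (hr : 0 < r) (hp : 1 ≤ p) :
    (∫⁻ x in Set.Ioi (0 : ℝ),
        (∫⁻ y in Set.pi Set.univ (fun _ : Fin k => Set.Ioo (0 : ℝ) x),
            ENNReal.ofReal (f y)) ^ p * ENNReal.ofReal (x ^ (-r - 1))) ^ (1 / p)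
      ≤ ∫⁻ v in Set.pi Set.univ (fun _ : Fin k => Set.Ioo (0 : ℝ) 1),
          (∫⁻ x in Set.Ioi (0 : ℝ),
              ENNReal.ofReal (x ^ k * f (fun i => x * v i)) ^ p *
                ENNReal.ofReal (x ^ (-r - 1))) ^ (1 / p) :=
  hardy_type_inequality_general k f hf r p hp
end

section
/- Let k be a positive integer, f : ℝ → ℝ a k-times continuously differentiable function, t ∈ ℝ and s ≥ 0. Then the k-th order forward difference satisfies Δ_s^k(f,t) = ∫_0^s ⋯ ∫_0^s f^{(k)}(t + v₁ + ⋯ + v_k) dv_k⋯dv₁. -/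
/-! By induction on `k`. Since `Δ_s^{k+1}(f,t) = Δ_s^k(f,t+s) - Δ_s^k(f,t)`, the induction
hypothesis writes it as the integral over the cube `(0,s]^k` of
`f^{(k)}(t + Σv + s) - f^{(k)}(t + Σv) = ∫_0^s f^{(k+1)}(t + Σv + w) dw`, and Fubini's theorem,
splitting off the last coordinate of `(0,s]^{k+1}`, turns the resulting double integral into
the integral over `(0,s]^{k+1}`. -/

open MeasureTheory Real Set
open scoped ENNReal NNReal

/-- The `k`-th order forward difference of `f` starting at `t` with increment `s`:
`Δ_s^k(f,t) = Σ_{j=0}^k C(k,j)(-1)^j f(t + (k-j)s)`. -/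
noncomputable def forwardDiff (k : ℕ) (f : ℝ → ℝ) (t s : ℝ) : ℝ :=
  ∑ j ∈ Finset.range (k + 1), (k.choose j : ℝ) * (-1) ^ j * f (t + ((k - j : ℕ) : ℝ) * s)

theorem MeasureTheory.setIntegral_univ_pi_eq_setIntegral_setIntegral_snoc {α E : Type*}
    [MeasureSpace α] [SigmaFinite (volume : Measure α)] [NormedAddCommGroup E] [NormedSpace ℝ E]
    {n : ℕ} (S : Fin (n + 1) → Set α) {g : (Fin (n + 1) → α) → E}
    (hg : IntegrableOn g (pi univ S)) :
    ∫ v in pi univ S, g v =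
      ∫ v in pi univ (fun i => S i.castSucc), ∫ x in S (Fin.last n), g (Fin.snoc v x) := by
  let e := (MeasurableEquiv.piFinSuccAbove (fun _ : Fin (n + 1) => α) (Fin.last n)).symm
  have he : MeasurePreserving e (volume.prod volume) volume :=
    (volume_preserving_piFinSuccAbove (fun _ : Fin (n + 1) => α) (Fin.last n)).symm
  have he_apply : ∀ p : α × (Fin n → α), e p = Fin.snoc p.2 p.1 := fun _ => by simp [e]; rfl
  have hpre : e ⁻¹' pi univ S = S (Fin.last n) ×ˢ pi univ fun i => S i.castSucc := by
    ext ⟨x, v⟩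
    simp [he_apply, Fin.forall_fin_succ', and_comm]
  rw [← he.setIntegral_preimage_emb e.measurableEmbedding, hpre, ← Measure.prod_restrict,
    integral_prod_symm]
  · simp [he_apply]
  · rw [Measure.prod_restrict, ← hpre]
    exact (he.integrableOn_comp_preimage e.measurableEmbedding).2 hg

theorem Continuous.integrableOn_univ_pi_Ioc {ι E : Type*} [Fintype ι] [NormedAddCommGroup E]
    {g : (ι → ℝ) → E} (hg : Continuous g) (a b : ι → ℝ) :
    IntegrableOn g (pi univ fun i => Ioc (a i) (b i)) :=
  hg.integrableOn_Icc.mono_set <| pi_univ_Icc a b ▸ pi_mono fun _ _ => Ioc_subset_Icc_self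

open fwdDiff

theorem forwardDiff_eq_fwdDiff_iter (k : ℕ) (f : ℝ → ℝ) (t s : ℝ) :
    forwardDiff k f t s = (Δ_[s])^[k] f t := by
  rw [fwdDiff_iter_eq_sum_shift, forwardDiff, ← Finset.sum_range_reflect]
  refine Finset.sum_congr rfl fun j hj => ?_
  rw [Finset.mem_range, Nat.lt_succ_iff] at hj
  rw [Nat.add_sub_cancel, Nat.sub_sub_self hj, Nat.choose_symm hj, zsmul_eq_mul, nsmul_eq_mul]
  push_cast
  ring

theorem fwdDiff_eq_setIntegral_deriv {E : Type*} [NormedAddCommGroup E] [NormedSpace ℝ E]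
    [CompleteSpace E] {g : ℝ → E} (hg : ContDiff ℝ 1 g) {s : ℝ} (hs : 0 ≤ s) (x : ℝ) :
    Δ_[s] g x = ∫ w in Ioc 0 s, deriv g (x + w) := by
  rw [← intervalIntegral.integral_of_le hs, intervalIntegral.integral_comp_add_left (deriv g) x,
    add_zero, intervalIntegral.integral_deriv_eq_sub (fun y _ => hg.differentiable one_ne_zero y)
      ((hg.continuous_deriv le_rfl).intervalIntegrable _ _), fwdDiff]

theorem fwdDiff_iter_eq_setIntegral_iteratedDeriv {s : ℝ} (hs : 0 ≤ s) (k : ℕ) {f : ℝ → ℝ}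
    (hf : ContDiff ℝ (k : ℕ∞) f) (t : ℝ) :
    (Δ_[s])^[k] f t =
      ∫ v in pi univ (fun _ : Fin k => Ioc 0 s), iteratedDeriv k f (t + ∑ i, v i) := by
  induction k generalizing t with
  | zero => simp [volume_pi, measureReal_def]
  | succ k ih =>
    have hfk : ContDiff ℝ (k : ℕ∞) f := hf.of_le (by exact_mod_cast k.le_succ)
    have hderiv_k : ContDiff ℝ 1 (iteratedDeriv k f) := by
      rw [contDiff_one_iff_deriv, ← iteratedDeriv_succ]
      exact ⟨hf.differentiable_iteratedDeriv k (by exact_mod_cast k.lt_succ_self),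
        hf.continuous_iteratedDeriv (k + 1) le_rfl⟩
    calc (Δ_[s])^[k + 1] f t = (Δ_[s])^[k] f (t + s) - (Δ_[s])^[k] f t := by
          rw [Function.iterate_succ_apply']; rfl
      _ = ∫ v in pi univ (fun _ : Fin k => Ioc 0 s),
            Δ_[s] (iteratedDeriv k f) (t + ∑ i, v i) := by
          rw [ih hfk, ih hfk, ← integral_sub]
          · simp only [fwdDiff, add_right_comm t s]
          all_goals exact Continuous.integrableOn_univ_pi_Ioc (by fun_prop) _ _
      _ = ∫ v in pi univ (fun _ : Fin k => Ioc 0 s), ∫ w in Ioc 0 s,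
            iteratedDeriv (k + 1) f (t + ∑ i, v i + w) := by
          simp only [fwdDiff_eq_setIntegral_deriv hderiv_k hs, iteratedDeriv_succ]
      _ = _ := by
          rw [setIntegral_univ_pi_eq_setIntegral_setIntegral_snoc]
          · simp [Fin.sum_univ_castSucc, add_assoc]
          · exact Continuous.integrableOn_univ_pi_Ioc (by fun_prop) _ _

theorem forwardDiff_eq_iterated_integral_general (k : ℕ) (f : ℝ → ℝ)
    (hf : ContDiff ℝ (k : ℕ∞) f) (t s : ℝ) (hs : 0 ≤ s) :
    forwardDiff k f t s =
      ∫ v in Set.pi Set.univ (fun _ : Fin k => Set.Ioc (0 : ℝ) s),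
        iteratedDeriv k f (t + ∑ i, v i) := by
  rw [forwardDiff_eq_fwdDiff_iter]
  exact fwdDiff_iter_eq_setIntegral_iteratedDeriv hs k hf t

/-- **Lemma.** For `k ≥ 1`, `f` of class `C^k`, `t ∈ ℝ` and `s ≥ 0`,
`Δ_s^k(f,t) = ∫_0^s ⋯ ∫_0^s f^{(k)}(t + v₁ + ⋯ + v_k) dv_k ⋯ dv₁`
(the integral over the cube `(0,s]^k`). -/
theorem forwardDiff_eq_iterated_integral (k : ℕ) (hk : 0 < k) (f : ℝ → ℝ)
    (hf : ContDiff ℝ (k : ℕ∞) f) (t s : ℝ) (hs : 0 ≤ s) :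
    forwardDiff k f t s =
      ∫ v in Set.pi Set.univ (fun _ : Fin k => Set.Ioc (0 : ℝ) s),
        iteratedDeriv k f (t + ∑ i, v i) :=
  forwardDiff_eq_iterated_integral_general k f hf t s hs
end

section
/- Let 1 ≤ p < ∞, f ∈ L^p(γ_d) and n a positive integer. There exists a constant C_n > 0 (independent of f) such that for all t > 0 and γ_d-almost every x ∈ ℝ^d, |∂^n/∂t^n P_t f(x)| ≤ C_n T*f(x) t^{−n}, where T*f(x) = sup_{t>0} |T_t f(x)| is the maximal function of the Ornstein–Uhlenbeck semigroup. -/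
open MeasureTheory Real Set
open scoped ENNReal NNReal

/-- The Gaussian measure `γ_d(dx) = π^{-d/2} e^{-‖x‖²} dx` on `ℝ^d`. -/
noncomputable def gaussMeasure (d : ℕ) : Measure (Fin d → ℝ) :=
  (volume : Measure (Fin d → ℝ)).withDensity
    (fun x => ENNReal.ofReal (Real.exp (-(∑ i, (x i) ^ 2)) / Real.pi ^ ((d : ℝ) / 2)))

/-- The Ornstein–Uhlenbeck semigroup `T_t`, with `T_0 f = f`. -/
noncomputable def ouSemigroup (d : ℕ) (t : ℝ) (f : (Fin d → ℝ) → ℝ) (x : Fin d → ℝ) : ℝ :=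
  if t = 0 then f x
  else (Real.pi ^ ((d : ℝ) / 2) * (1 - Real.exp (-2 * t)) ^ ((d : ℝ) / 2))⁻¹ *
    ∫ y : Fin d → ℝ,
      Real.exp (-(∑ i, (y i - Real.exp (-t) * x i) ^ 2) / (1 - Real.exp (-2 * t))) * f y

/-- The Poisson–Hermite semigroup `P_t f(x) = π^{-1/2} ∫_0^∞ u^{-1/2} e^{-u} T_{t²/4u} f(x) du`. -/
noncomputable def poissonHermite (d : ℕ) (t : ℝ) (f : (Fin d → ℝ) → ℝ) (x : Fin d → ℝ) : ℝ :=
  (Real.pi ^ ((1 : ℝ) / 2))⁻¹ *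
    ∫ u in Set.Ioi (0 : ℝ), u ^ (-(1 : ℝ) / 2) * Real.exp (-u) *
      ouSemigroup d (t ^ 2 / (4 * u)) f x

/-!
Substituting `s = t²/(4u)` writes `P_t f(x) = π^{-1/2} ∫₀^∞ K(t, s) T_s f(x) ds` with
`K(t, s) = t s^{-3/2} e^{-t²/4s} / 2`. Its `t`-derivatives are
`∂ₜⁿ K(t, s) = s^{-1-n/2} qₙ(t/√s) e^{-t²/4s} / 2` for polynomials `qₙ`, so
`|∂ₜⁿ K(t, s)| ≲ s^{-1-n/2} e^{-t²/8s}`, which for `n ≥ 1` is integrable in `s` with integral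
`Cₙ t^{-n}` by scaling. Differentiating under the integral sign and bounding `|T_s f(x)|` by
`T*f(x)` gives the estimate.
-/

open Polynomial

lemma pow_abs_mul_exp_neg_sq_div_eight_le (i : ℕ) (v : ℝ) :
    |v| ^ i * exp (-(v ^ 2 / 8)) ≤ i.factorial * exp 2 := by
  have hpow : |v| ^ i ≤ i.factorial * exp |v| := by
    have := pow_div_factorial_le_exp _ (abs_nonneg v) i
    rwa [div_le_iff₀ (by positivity), mul_comm] at this
  have hexp : exp |v| * exp (-(v ^ 2 / 8)) ≤ exp 2 := by
    rw [← exp_add, exp_le_exp]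
    nlinarith [sq_nonneg (|v| - 4), sq_abs v]
  calc |v| ^ i * exp (-(v ^ 2 / 8)) ≤ i.factorial * exp |v| * exp (-(v ^ 2 / 8)) := by gcongr
    _ ≤ i.factorial * exp 2 := by rw [mul_assoc]; gcongr

lemma Polynomial.exists_abs_eval_mul_exp_neg_sq_div_eight_le (q : ℝ[X]) :
    ∃ C > 0, ∀ v, |q.eval v| * exp (-(v ^ 2 / 8)) ≤ C := by
  refine ⟨exp 2 * ∑ i ∈ Finset.range (q.natDegree + 1), |q.coeff i| * i.factorial + 1,
    by positivity, fun v => le_add_of_le_of_nonneg ?_ zero_le_one⟩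
  have habs : |q.eval v| ≤ ∑ i ∈ Finset.range (q.natDegree + 1), |q.coeff i| * |v| ^ i := by
    rw [q.eval_eq_sum_range]
    refine (Finset.abs_sum_le_sum_abs _ _).trans_eq ?_
    simp only [abs_mul, abs_pow]
  calc |q.eval v| * exp (-(v ^ 2 / 8))
      ≤ (∑ i ∈ Finset.range (q.natDegree + 1), |q.coeff i| * |v| ^ i) * exp (-(v ^ 2 / 8)) := by
        gcongr
    _ = ∑ i ∈ Finset.range (q.natDegree + 1), |q.coeff i| * (|v| ^ i * exp (-(v ^ 2 / 8))) := by
        simp only [Finset.sum_mul, mul_assoc]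
    _ ≤ ∑ i ∈ Finset.range (q.natDegree + 1), |q.coeff i| * (i.factorial * exp 2) :=
        Finset.sum_le_sum fun i _ =>
          mul_le_mul_of_nonneg_left (pow_abs_mul_exp_neg_sq_div_eight_le i v) (abs_nonneg _)
    _ = _ := by rw [Finset.mul_sum]; refine Finset.sum_congr rfl fun i _ => by ring

lemma rpow_mul_exp_neg_div_eq {e b s : ℝ} (hs : 0 < s) :
    s ^ e * exp (-(b / s)) =
      (|(-1 : ℝ)| * s ^ ((-1 : ℝ) - 1)) •
        ((s ^ (-1 : ℝ)) ^ (-e - 2) * exp (-(b * s ^ (-1 : ℝ)))) := by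
  rw [smul_eq_mul, abs_neg, abs_one, one_mul, ← rpow_mul hs.le, ← mul_assoc, ← rpow_add hs,
    rpow_neg_one, ← div_eq_mul_inv]
  norm_num

lemma integrableOn_rpow_mul_exp_neg_div {e b : ℝ} (he : e < -1) (hb : 0 < b) :
    IntegrableOn (fun s => s ^ e * exp (-(b / s))) (Ioi 0) := by
  have hg : IntegrableOn (fun u : ℝ => u ^ (-e - 2) * exp (-b * u ^ (1 : ℝ))) (Ioi 0) :=
    integrableOn_rpow_mul_exp_neg_mul_rpow (by linarith) one_pos hb
  simp only [rpow_one, neg_mul] at hg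
  refine ((integrableOn_Ioi_comp_rpow_iff _ (p := -1) (by norm_num)).mpr hg).congr_fun
    (fun s hs => (rpow_mul_exp_neg_div_eq hs).symm) measurableSet_Ioi

lemma integral_rpow_mul_exp_neg_div {e b : ℝ} (he : e < -1) (hb : 0 < b) :
    ∫ s in Ioi 0, s ^ e * exp (-(b / s)) = b ^ (e + 1) * Gamma (-e - 1) := by
  rw [setIntegral_congr_fun measurableSet_Ioi (fun s hs => rpow_mul_exp_neg_div_eq hs),
    integral_comp_rpow_Ioi (fun u => u ^ (-e - 2) * exp (-(b * u))) (by norm_num),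
    show -e - 2 = (-e - 1) - 1 by ring,
    integral_rpow_mul_exp_neg_mul_Ioi (by linarith) hb, one_div, inv_rpow hb.le, ← rpow_neg hb.le]
  ring_nf

/-- `subordKernel n r s = ∂ᵣⁿ (r s^{-3/2} e^{-r²/4s} / 2)`; the recursion for `subordKernelPoly`
is what one differentiation in `r` produces. -/
noncomputable def subordKernelPoly : ℕ → ℝ[X]
  | 0 => X
  | n + 1 => derivative (subordKernelPoly n) - C 2⁻¹ * (X * subordKernelPoly n)

noncomputable def subordKernel (n : ℕ) (r s : ℝ) : ℝ :=
  2⁻¹ * s ^ (-1 - (n : ℝ) / 2) * (subordKernelPoly n).eval (r / √s) * exp (-(r ^ 2 / (4 * s)))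

lemma hasDerivAt_subordKernel (n : ℕ) {s : ℝ} (hs : 0 < s) (r : ℝ) :
    HasDerivAt (subordKernel n · s) (subordKernel (n + 1) r s) r := by
  have hw : 0 < √s := sqrt_pos.mpr hs
  have hpoly := ((subordKernelPoly n).hasDerivAt (r / √s)).comp r
    ((hasDerivAt_id r).div_const √s)
  have hexp := (((hasDerivAt_pow 2 r).div_const (4 * s)).neg).exp
  refine (((hasDerivAt_const r (2⁻¹ * s ^ (-1 - (n : ℝ) / 2))).mul hpoly).mul hexp).congr_deriv ?_
  have hsplit : s ^ (-1 - ((n + 1 : ℕ) : ℝ) / 2) = s ^ (-1 - (n : ℝ) / 2) * (√s)⁻¹ := by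
    rw [sqrt_eq_rpow, ← rpow_neg hs.le, ← rpow_add hs]; push_cast; ring_nf
  have hs' : s = √s ^ 2 := (sq_sqrt hs.le).symm
  simp only [subordKernel, subordKernelPoly, eval_sub, eval_mul, eval_C, eval_X, hsplit,
    Function.comp_apply, Pi.mul_apply, Pi.neg_apply, id]
  generalize √s = w at *
  subst hs'
  field_simp
  ring

lemma subordKernel_zero {r s : ℝ} (hs : 0 < s) :
    subordKernel 0 r s = r / 2 * (s ^ (-(3 : ℝ) / 2) * exp (-(r ^ 2 / 4 / s))) := by
  have h32 : s ^ (-(3 : ℝ) / 2) = s ^ (-1 - ((0 : ℕ) : ℝ) / 2) * (√s)⁻¹ := by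
    rw [sqrt_eq_rpow, ← rpow_neg hs.le, ← rpow_add hs]; norm_num
  rw [h32, subordKernel, subordKernelPoly, eval_X, div_div]
  ring

lemma abs_subordKernel_le (n : ℕ) : ∃ C > 0, ∀ r s : ℝ, 0 < s →
    |subordKernel n r s| ≤ C * (s ^ (-1 - (n : ℝ) / 2) * exp (-(r ^ 2 / 8 / s))) := by
  obtain ⟨C, hC, hbound⟩ := (subordKernelPoly n).exists_abs_eval_mul_exp_neg_sq_div_eight_le
  refine ⟨C / 2, by positivity, fun r s hs => ?_⟩
  -- half of the Gaussian factor absorbs the polynomial, the other half gives the decay in `s`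
  have hsplit : exp (-(r ^ 2 / (4 * s))) =
      exp (-((r / √s) ^ 2 / 8)) * exp (-(r ^ 2 / 8 / s)) := by
    rw [← exp_add, div_pow, sq_sqrt hs.le]; ring_nf
  have hpos : 0 < s ^ (-1 - (n : ℝ) / 2) := rpow_pos_of_pos hs _
  rw [subordKernel, hsplit]
  simp only [abs_mul, abs_of_pos hpos, abs_of_pos (exp_pos _)]
  calc |(2⁻¹ : ℝ)| * s ^ (-1 - (n : ℝ) / 2) * |eval (r / √s) (subordKernelPoly n)| *
        (exp (-((r / √s) ^ 2 / 8)) * exp (-(r ^ 2 / 8 / s)))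
      = 2⁻¹ * (|eval (r / √s) (subordKernelPoly n)| * exp (-((r / √s) ^ 2 / 8))) *
        (s ^ (-1 - (n : ℝ) / 2) * exp (-(r ^ 2 / 8 / s))) := by norm_num; ring
    _ ≤ 2⁻¹ * C * (s ^ (-1 - (n : ℝ) / 2) * exp (-(r ^ 2 / 8 / s))) := by
        gcongr; exact hbound _
    _ = C / 2 * (s ^ (-1 - (n : ℝ) / 2) * exp (-(r ^ 2 / 8 / s))) := by ring

lemma continuousOn_subordKernel (n : ℕ) (r : ℝ) : ContinuousOn (subordKernel n r) (Ioi 0) := by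
  intro s hs
  have hs' : s ≠ 0 := ne_of_gt hs
  have hw : √s ≠ 0 := (sqrt_pos.mpr hs).ne'
  refine ContinuousAt.continuousWithinAt ?_
  unfold subordKernel
  fun_prop (disch := first | exact Or.inl hs' | exact hs' | exact hw | positivity)

lemma integrableOn_subordKernel (n : ℕ) {r : ℝ} (hr : 0 < r) :
    IntegrableOn (subordKernel n r) (Ioi 0) := by
  cases n with
  | zero =>
    have h : IntegrableOn (fun s => s ^ (-(3 : ℝ) / 2) * exp (-(r ^ 2 / 4 / s))) (Ioi 0) :=
      integrableOn_rpow_mul_exp_neg_div (by norm_num) (by positivity)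
    exact IntegrableOn.congr_fun (h.const_mul (r / 2)) (fun s hs => (subordKernel_zero hs).symm)
      measurableSet_Ioi
  | succ n =>
    obtain ⟨C, -, hC⟩ := abs_subordKernel_le (n + 1)
    refine Integrable.mono' ((integrableOn_rpow_mul_exp_neg_div ?_ (by positivity)).const_mul C)
      ((continuousOn_subordKernel _ r).aestronglyMeasurable measurableSet_Ioi)
      ((ae_restrict_iff' measurableSet_Ioi).mpr (.of_forall fun s hs => hC r s hs))
    push_cast
    linarith [n.cast_nonneg (α := ℝ)]

/-- `poissonHermite d t f x = π^{-1/2} * subordinate (ouSemigroup d · f x) t` holds by `rfl`. -/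
noncomputable def subordinate (ψ : ℝ → ℝ) (r : ℝ) : ℝ :=
  ∫ u in Ioi 0, u ^ (-(1 : ℝ) / 2) * exp (-u) * ψ (r ^ 2 / (4 * u))

lemma subordinate_eq_integral_subordKernel_mul (ψ : ℝ → ℝ) {r : ℝ} (hr : 0 < r) :
    subordinate ψ r = ∫ s in Ioi 0, subordKernel 0 r s * ψ s := by
  set c := r ^ 2 / 4
  have hc : 0 < c := by positivity
  have hderiv : ∀ s ∈ Ioi (0 : ℝ),
      HasDerivWithinAt (fun s => c * s⁻¹) (c * -(s ^ 2)⁻¹) (Ioi 0) s :=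
    fun s hs => ((hasDerivAt_inv (ne_of_gt hs)).const_mul c).hasDerivWithinAt
  have hinj : InjOn (fun s => c * s⁻¹) (Ioi 0) :=
    fun a _ b _ h => inv_injective (mul_left_cancel₀ hc.ne' h)
  have himage : (fun s => c * s⁻¹) '' Ioi 0 = Ioi 0 := by
    ext u
    simp only [mem_image, mem_Ioi]
    exact ⟨fun ⟨s, hs, hsu⟩ => hsu ▸ by positivity,
      fun hu => ⟨c * u⁻¹, by positivity, by field_simp⟩⟩
  have hsubst := integral_image_eq_integral_abs_deriv_smul measurableSet_Ioi hderiv hinj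
    (fun u => u ^ (-(1 : ℝ) / 2) * exp (-u) * ψ (r ^ 2 / (4 * u)))
  rw [himage] at hsubst
  rw [subordinate, hsubst]
  refine setIntegral_congr_fun measurableSet_Ioi fun s hs => ?_
  obtain ⟨w, hw, rfl⟩ : ∃ w > 0, w ^ 2 = s := ⟨√s, sqrt_pos.mpr hs, sq_sqrt (le_of_lt hs)⟩
  have hcw : c * (w ^ 2)⁻¹ = (r / (2 * w)) ^ 2 := by ring
  have hhalf : ((r / (2 * w)) ^ 2) ^ (-(1 : ℝ) / 2) = 2 * w / r := by
    rw [← rpow_natCast, ← rpow_mul (by positivity)]; norm_num [rpow_neg_one]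
  simp only [subordKernel, subordKernelPoly, eval_X, smul_eq_mul, hcw, hhalf, sqrt_sq hw.le,
    abs_mul, abs_neg, abs_of_pos hc, abs_of_pos (by positivity : (0 : ℝ) < ((w ^ 2) ^ 2)⁻¹),
    Nat.cast_zero, zero_div, sub_zero, rpow_neg_one]
  rw [show r ^ 2 / (4 * (r / (2 * w)) ^ 2) = w ^ 2 by field_simp; ring,
    show (r / (2 * w)) ^ 2 = r ^ 2 / (4 * w ^ 2) by ring]
  simp only [c]
  field_simp
  ring

section BoundedIntegrand

variable {φ : ℝ → ℝ} {M : ℝ}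

lemma hasDerivAt_integral_subordKernel_mul
    (hφ : AEStronglyMeasurable φ (volume.restrict (Ioi 0)))
    (hφM : ∀ s ∈ Ioi (0 : ℝ), |φ s| ≤ M) (n : ℕ) {r : ℝ} (hr : 0 < r) :
    HasDerivAt (fun r => ∫ s in Ioi 0, subordKernel n r s * φ s)
      (∫ s in Ioi 0, subordKernel (n + 1) r s * φ s) r := by
  obtain ⟨C, hC, hK⟩ := abs_subordKernel_le (n + 1)
  set e : ℝ := -1 - ((n + 1 : ℕ) : ℝ) / 2
  have he : e < -1 := by simp only [e]; push_cast; linarith [n.cast_nonneg (α := ℝ)]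
  have hφM' : ∀ᵐ s ∂volume.restrict (Ioi 0), ‖φ s‖ ≤ M :=
    (ae_restrict_iff' measurableSet_Ioi).mpr (.of_forall hφM)
  have hbound : ∀ᵐ s ∂volume.restrict (Ioi 0), ∀ r' ∈ Metric.ball r (r / 2),
      ‖subordKernel (n + 1) r' s * φ s‖ ≤ C * (s ^ e * exp (-(r ^ 2 / 32 / s))) * M := by
    refine (ae_restrict_iff' measurableSet_Ioi).mpr (.of_forall fun s (hs : 0 < s) r' hr' => ?_)
    have hr'r : r ^ 2 / 32 ≤ r' ^ 2 / 8 := by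
      rw [Metric.mem_ball, Real.dist_eq, abs_lt] at hr'
      nlinarith
    rw [norm_mul, norm_eq_abs, norm_eq_abs]
    refine mul_le_mul ((hK r' s hs).trans ?_) (hφM s hs) (abs_nonneg _) (by positivity)
    gcongr
  exact (hasDerivAt_integral_of_dominated_loc_of_deriv_le (Metric.ball_mem_nhds r (half_pos hr))
    (.of_forall fun r' => (continuousOn_subordKernel n r').aestronglyMeasurable
      measurableSet_Ioi |>.mul hφ)
    ((integrableOn_subordKernel n hr).mul_bdd hφ hφM')
    ((continuousOn_subordKernel (n + 1) r).aestronglyMeasurable measurableSet_Ioi |>.mul hφ)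
    hbound
    (((integrableOn_rpow_mul_exp_neg_div he (by positivity)).const_mul C).mul_const M)
    ((ae_restrict_iff' measurableSet_Ioi).mpr (.of_forall fun s (hs : 0 < s) r' _ =>
      (hasDerivAt_subordKernel n hs r').mul_const (φ s)))).2

lemma iteratedDeriv_subordinate (hφ : AEStronglyMeasurable φ (volume.restrict (Ioi 0)))
    (hφM : ∀ s ∈ Ioi (0 : ℝ), |φ s| ≤ M) (n : ℕ) {r : ℝ} (hr : 0 < r) :
    iteratedDeriv n (subordinate φ) r = ∫ s in Ioi 0, subordKernel n r s * φ s := by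
  induction n generalizing r with
  | zero => exact subordinate_eq_integral_subordKernel_mul φ hr
  | succ n ih =>
    have heq : iteratedDeriv n (subordinate φ) =ᶠ[nhds r]
        fun r => ∫ s in Ioi 0, subordKernel n r s * φ s :=
      Filter.eventually_of_mem (Ioi_mem_nhds hr) fun r' hr' => ih hr'
    rw [iteratedDeriv_succ, heq.deriv_eq, (hasDerivAt_integral_subordKernel_mul hφ hφM n hr).deriv]

end BoundedIntegrand

theorem exists_abs_iteratedDeriv_subordinate_le {n : ℕ} (hn : 0 < n) :
    ∃ C > 0, ∀ (φ : ℝ → ℝ) (M : ℝ), AEStronglyMeasurable φ (volume.restrict (Ioi 0)) →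
      (∀ s ∈ Ioi (0 : ℝ), |φ s| ≤ M) → ∀ t > 0,
        |iteratedDeriv n (subordinate φ) t| ≤ C * M * t ^ (-(n : ℝ)) := by
  obtain ⟨C, hC, hK⟩ := abs_subordKernel_le n
  have he : -1 - (n : ℝ) / 2 < -1 := by
    have : (0 : ℝ) < n := Nat.cast_pos.mpr hn
    linarith
  have hΓ : 0 < Gamma ((n : ℝ) / 2) := Gamma_pos_of_pos (by positivity)
  refine ⟨C * 8 ^ ((n : ℝ) / 2) * Gamma ((n : ℝ) / 2), by positivity,
    fun φ M hφ hφM t ht => ?_⟩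
  have hbound : ∀ᵐ s ∂volume.restrict (Ioi 0), ‖subordKernel n t s * φ s‖ ≤
      C * M * (s ^ (-1 - (n : ℝ) / 2) * exp (-(t ^ 2 / 8 / s))) := by
    refine (ae_restrict_iff' measurableSet_Ioi).mpr (.of_forall fun s (hs : 0 < s) => ?_)
    rw [norm_mul, norm_eq_abs, norm_eq_abs, mul_right_comm]
    exact mul_le_mul (hK t s hs) (hφM s hs) (abs_nonneg _) (by positivity)
  have hscale : (t ^ 2 / 8) ^ (-1 - (n : ℝ) / 2 + 1) = 8 ^ ((n : ℝ) / 2) * t ^ (-(n : ℝ)) := by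
    rw [show -1 - (n : ℝ) / 2 + 1 = -((n : ℝ) / 2) by ring, div_rpow (by positivity) (by norm_num),
      ← rpow_natCast, ← rpow_mul ht.le, rpow_neg (by norm_num), div_inv_eq_mul]
    push_cast
    ring_nf
  calc |iteratedDeriv n (subordinate φ) t|
      = ‖∫ s in Ioi 0, subordKernel n t s * φ s‖ := by
        rw [iteratedDeriv_subordinate hφ hφM n ht, norm_eq_abs]
    _ ≤ ∫ s in Ioi 0, C * M * (s ^ (-1 - (n : ℝ) / 2) * exp (-(t ^ 2 / 8 / s))) :=
        norm_integral_le_of_norm_le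
          ((integrableOn_rpow_mul_exp_neg_div he (by positivity)).const_mul _) hbound
    _ = C * 8 ^ ((n : ℝ) / 2) * Gamma ((n : ℝ) / 2) * M * t ^ (-(n : ℝ)) := by
        rw [integral_const_mul, integral_rpow_mul_exp_neg_div he (by positivity), hscale,
          show -(-1 - (n : ℝ) / 2) - 1 = n / 2 by ring]
        ring

lemma volume_absolutelyContinuous_gaussMeasure (d : ℕ) :
    (volume : Measure (Fin d → ℝ)) ≪ gaussMeasure d :=
  withDensity_absolutelyContinuous' (Measurable.ennreal_ofReal (by fun_prop)).aemeasurable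
    (.of_forall fun x => (ENNReal.ofReal_pos.mpr (by positivity)).ne')

lemma ouSemigroup_congr_ae {d : ℕ} {f g : (Fin d → ℝ) → ℝ} (hfg : f =ᵐ[volume] g) {s : ℝ}
    (hs : s ≠ 0) (x : Fin d → ℝ) : ouSemigroup d s f x = ouSemigroup d s g x := by
  simp only [ouSemigroup, if_neg hs]
  congr 1
  exact integral_congr_ae (hfg.mono fun y hy => by simp only [hy])

lemma measurable_ouSemigroup_apply {d : ℕ} {f : (Fin d → ℝ) → ℝ} (hf : Measurable f)
    (x : Fin d → ℝ) : Measurable (fun s => ouSemigroup d s f x) := by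
  have hkernel : StronglyMeasurable fun q : ℝ × (Fin d → ℝ) =>
      exp (-(∑ i, (q.2 i - exp (-q.1) * x i) ^ 2) / (1 - exp (-2 * q.1))) * f q.2 :=
    (by fun_prop : Measurable _).stronglyMeasurable
  unfold ouSemigroup
  exact Measurable.ite (measurableSet_singleton 0) measurable_const
    ((by fun_prop : Measurable _).mul hkernel.integral_prod_right'.measurable)

lemma aestronglyMeasurable_ouSemigroup_apply {d : ℕ} {f : (Fin d → ℝ) → ℝ}
    (hf : AEStronglyMeasurable f (gaussMeasure d)) (x : Fin d → ℝ) :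
    AEStronglyMeasurable (fun s => ouSemigroup d s f x) (volume.restrict (Ioi 0)) := by
  have hfg := (volume_absolutelyContinuous_gaussMeasure d).ae_eq hf.ae_eq_mk
  refine (measurable_ouSemigroup_apply hf.stronglyMeasurable_mk.measurable x)
    |>.aestronglyMeasurable
    |>.congr ((ae_restrict_iff' measurableSet_Ioi).mpr (.of_forall fun s (hs : 0 < s) => ?_))
  exact (ouSemigroup_congr_ae hfg hs.ne' x).symm

theorem poissonHermite_deriv_maximal_bound_general (d : ℕ) (p : ℝ)
    (f : (Fin d → ℝ) → ℝ) (hf : MemLp f (ENNReal.ofReal p) (gaussMeasure d))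
    (n : ℕ) (hn : 0 < n) :
    ∃ C : ℝ, 0 < C ∧ ∀ t : ℝ, 0 < t → ∀ᵐ x ∂(gaussMeasure d),
      ENNReal.ofReal |iteratedDeriv n (fun r => poissonHermite d r f x) t|
        ≤ ENNReal.ofReal C *
            (⨆ s : {s : ℝ // 0 < s}, ENNReal.ofReal |ouSemigroup d s f x|) *
            ENNReal.ofReal (t ^ (-(n : ℝ))) := by
  obtain ⟨C, hC, hbound⟩ := exists_abs_iteratedDeriv_subordinate_le hn
  set c : ℝ := (π ^ ((1 : ℝ) / 2))⁻¹
  have hc : 0 < c := by positivity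
  refine ⟨c * C, by positivity, fun t ht => .of_forall fun x => ?_⟩
  set S := ⨆ s : {s : ℝ // 0 < s}, ENNReal.ofReal |ouSemigroup d s f x|
  obtain hS | hS := eq_or_ne S ⊤
  · rw [hS, ENNReal.mul_top (by positivity), ENNReal.top_mul (by positivity)]
    exact le_top
  have hM : ∀ s ∈ Ioi (0 : ℝ), |ouSemigroup d s f x| ≤ S.toReal := fun s hs =>
    (ENNReal.ofReal_le_iff_le_toReal hS).mp
      (le_iSup (fun s : {s : ℝ // 0 < s} => ENNReal.ofReal |ouSemigroup d s f x|) ⟨s, hs⟩)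
  have hderiv : iteratedDeriv n (fun r => poissonHermite d r f x) t =
      c * iteratedDeriv n (subordinate fun s => ouSemigroup d s f x) t :=
    iteratedDeriv_const_mul_field c _
  calc ENNReal.ofReal |iteratedDeriv n (fun r => poissonHermite d r f x) t|
      ≤ ENNReal.ofReal (c * C * S.toReal * t ^ (-(n : ℝ))) := by
        refine ENNReal.ofReal_le_ofReal ?_
        rw [hderiv, abs_mul, abs_of_pos hc, mul_assoc c C, mul_assoc c]
        exact mul_le_mul_of_nonneg_left
          (hbound _ _ (aestronglyMeasurable_ouSemigroup_apply hf.1 x) hM t ht) hc.le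
    _ = ENNReal.ofReal (c * C) * S * ENNReal.ofReal (t ^ (-(n : ℝ))) := by
        rw [ENNReal.ofReal_mul (by positivity), ENNReal.ofReal_mul (by positivity),
          ENNReal.ofReal_toReal hS]

/-- **Lemma (maximal function estimate for derivatives of the Poisson–Hermite semigroup).**
For `f ∈ L^p(γ_d)`, `1 ≤ p < ∞` and `n ≥ 1`, there is `C_n > 0` such that for all `t > 0`
and `γ_d`-a.e. `x`, `|∂ⁿ/∂tⁿ P_t f(x)| ≤ C_n T*f(x) t^{-n}`, where
`T*f(x) = sup_{s>0} |T_s f(x)|`. -/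
theorem poissonHermite_deriv_maximal_bound (d : ℕ) (p : ℝ) (hp : 1 ≤ p)
    (f : (Fin d → ℝ) → ℝ) (hf : MemLp f (ENNReal.ofReal p) (gaussMeasure d))
    (n : ℕ) (hn : 0 < n) :
    ∃ C : ℝ, 0 < C ∧ ∀ t : ℝ, 0 < t → ∀ᵐ x ∂(gaussMeasure d),
      ENNReal.ofReal |iteratedDeriv n (fun r => poissonHermite d r f x) t|
        ≤ ENNReal.ofReal C *
            (⨆ s : {s : ℝ // 0 < s}, ENNReal.ofReal |ouSemigroup d s f x|) *
            ENNReal.ofReal (t ^ (-(n : ℝ))) :=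
  poissonHermite_deriv_maximal_bound_general d p f hf n hn
end
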